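/- If at least one of the endomorphisms B_1, …, B_n is bijective, then the Koszul-type complex (C^•, ∇) is exact: for every integer p, the kernel of ∇ : C^p → C^{p+1} equals the image of ∇ : C^{p−1} → C^p. In particular ∇ : C^0 → C^1 is injective, and for each p-element subset family σ ∈ C^p with ∇σ = 0 and p ≥ 1 there exists τ ∈ C^{p−1} with ∇τ = σ. -/

import Mathlib

/-! Koszul-type complex from pairwise commuting endomorphisms.

`KoszulC R M n p` is the module of functions assigning to each `p`-element
subset `I` of `{1, …, n}` (modeled as `Fin n`) an element of `M`.  For `p > n`
this module is automatically zero (there are no such subsets), and terms in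
negative degree (which are zero) are omitted by indexing over `ℕ`. -/

/-- The `p`-th term of the Koszul-type complex: functions from `p`-element
subsets of `{1, …, n}` to `M`. -/
abbrev KoszulC (R M : Type*) [CommRing R] [AddCommGroup M] [Module R M] (n p : ℕ) :=
  {I : Finset (Fin n) // I.card = p} → M

/-- `pos k J`: the position of `k` in `J`, i.e. the number of `j ∈ J` with `j < k`. -/
def KoszulPos {n : ℕ} (k : Fin n) (J : Finset (Fin n)) : ℕ :=
  (J.filter (fun j => j < k)).card

/-- The differential `∇ : C^p → C^{p+1}`,
`(∇σ)_J = Σ_{k ∈ J} (−1)^{pos(k,J)} B_k (σ_{J ∖ {k}})`. -/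
def koszulNabla {R M : Type*} [CommRing R] [AddCommGroup M] [Module R M] {n : ℕ}
    (B : Fin n → Module.End R M) (p : ℕ) :
    KoszulC R M n p →ₗ[R] KoszulC R M n (p + 1) where
  toFun σ J := ∑ k ∈ J.1.attach,
    ((-1 : ℤ) ^ KoszulPos k.1 J.1) •
      B k.1 (σ ⟨J.1.erase k.1, by
        simp [Finset.card_erase_of_mem k.2, J.2]⟩)
  map_add' σ τ := by
    funext J
    simp [Finset.sum_add_distrib, smul_add]
  map_smul' r σ := by
    funext J
    simp only [map_smul, Pi.smul_apply, Finset.smul_sum, RingHom.id_apply]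
    exact Finset.sum_congr rfl fun k _ => (smul_comm _ _ _)


/-! Contraction with the `k`-th basis vector, `(ι σ)_I = ± σ_{I ∪ {k}}` for `k ∉ I`, is a
homotopy from `B_k` to `0`: `∇ ι + ι ∇ = B_k`, for arbitrary endomorphisms `B_i`. If `∇ σ = 0`
this gives `B_k σ = ∇ (ι σ)`; as `B_k` commutes with `∇` and is bijective, `σ = ∇ (B_k⁻¹ ι σ)`.
Both this identity and `∇ ∇ = 0` are proved for cochains of all degrees at once, where the only
input is how `pos(i, J)` changes when an element is removed from `J`. -/

theorem Finset.sum_sum_erase_eq_zero_of_antisymm {α M : Type*} [DecidableEq α] [AddCommGroup M]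
    (s : Finset α) (g : α → α → M) (hg : ∀ i ∈ s, ∀ j ∈ s, i ≠ j → g j i = -g i j) :
    ∑ i ∈ s, ∑ j ∈ s.erase i, g i j = 0 := by
  have hmem (x : α × α) : x ∈ s.offDiag ↔ x.1 ∈ s ∧ x.2 ∈ s.erase x.1 := by
    rw [Finset.mem_offDiag, Finset.mem_erase]
    tauto
  rw [← Finset.sum_finset_product' s.offDiag s s.erase hmem]
  refine Finset.sum_involution (fun x _ => x.swap) (fun x hx => ?_) (fun x hx _ => ?_)
    (fun x hx => by simp only [Finset.mem_offDiag] at hx ⊢; grind) (fun x _ => x.swap_swap)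
  · obtain ⟨hi, hj, hij⟩ := Finset.mem_offDiag.mp hx
    simp [hg x.1 hi x.2 hj hij]
  · exact fun h => (Finset.mem_offDiag.mp hx).2.2 (Prod.ext_iff.mp h).2

section KoszulSign

variable {n : ℕ} {i j k : Fin n} {J : Finset (Fin n)}

theorem koszulPos_eq_koszulPos_erase_add (hj : j ∈ J) :
    KoszulPos i J = KoszulPos i (J.erase j) + if j < i then 1 else 0 := by
  unfold KoszulPos
  rw [Finset.filter_erase]
  split_ifs with h
  · rw [Finset.card_erase_add_one (Finset.mem_filter.mpr ⟨hj, h⟩)]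
  · have hj' : j ∉ J.filter (· < i) := fun hmem => h (Finset.mem_filter.mp hmem).2
    rw [Finset.erase_eq_of_notMem hj', add_zero]

theorem neg_one_pow_koszulPos_erase (hj : j ∈ J) :
    (-1 : ℤ) ^ KoszulPos i (J.erase j) =
      if j < i then -(-1 : ℤ) ^ KoszulPos i J else (-1 : ℤ) ^ KoszulPos i J := by
  rw [koszulPos_eq_koszulPos_erase_add (i := i) hj]
  split_ifs <;> simp [pow_succ]

theorem koszulSign_swap (hi : i ∈ J) (hj : j ∈ J) (hij : i ≠ j) :
    (-1 : ℤ) ^ KoszulPos i J * (-1 : ℤ) ^ KoszulPos j (J.erase i) =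
      -((-1 : ℤ) ^ KoszulPos j J * (-1 : ℤ) ^ KoszulPos i (J.erase j)) := by
  rw [neg_one_pow_koszulPos_erase hi, neg_one_pow_koszulPos_erase hj]
  rcases hij.lt_or_gt with h | h <;> simp [h, h.not_gt, mul_comm]

theorem koszulSign_erase_erase (hj : j ∈ J) (hk : k ∈ J) (hjk : j ≠ k) :
    (-1 : ℤ) ^ KoszulPos j (J.erase k) * (-1 : ℤ) ^ KoszulPos k (J.erase j) =
      -((-1 : ℤ) ^ KoszulPos j J * (-1 : ℤ) ^ KoszulPos k J) := by
  rw [neg_one_pow_koszulPos_erase hj, neg_one_pow_koszulPos_erase hk]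
  rcases hjk.lt_or_gt with h | h <;> simp [h, h.not_gt]

end KoszulSign

section Ungraded

variable {R M : Type*} [CommRing R] [AddCommGroup M] [Module R M] {n : ℕ}

/-- `koszulNabla` on cochains of all degrees at once, encoded as functions on all subsets;
`KoszulC.extend` embeds the degree-`p` cochains. -/
def koszulDiff (B : Fin n → Module.End R M) (f : Finset (Fin n) → M) (J : Finset (Fin n)) : M :=
  ∑ k ∈ J, (-1 : ℤ) ^ KoszulPos k J • B k (f (J.erase k))

theorem koszulDiff_koszulDiff (B : Fin n → Module.End R M) (hB : ∀ i j, Commute (B i) (B j))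
    (f : Finset (Fin n) → M) : koszulDiff B (koszulDiff B f) = 0 := by
  funext J
  have hexpand : koszulDiff B (koszulDiff B f) J = ∑ j ∈ J, ∑ i ∈ J.erase j,
      ((-1 : ℤ) ^ KoszulPos j J * (-1 : ℤ) ^ KoszulPos i (J.erase j)) •
        B j (B i (f ((J.erase j).erase i))) := by
    simp only [koszulDiff, map_sum, map_zsmul, Finset.smul_sum, smul_smul]
  rw [hexpand, Pi.zero_apply]
  refine Finset.sum_sum_erase_eq_zero_of_antisymm J _ fun j hj i hi hji => ?_
  have hBij : B i (B j (f ((J.erase j).erase i))) = B j (B i (f ((J.erase j).erase i))) :=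
    LinearMap.congr_fun (hB i j).eq _
  rw [koszulSign_swap hi hj hji.symm, neg_smul, Finset.erase_right_comm, hBij]

def koszulContract (k : Fin n) (f : Finset (Fin n) → M) (I : Finset (Fin n)) : M :=
  if k ∈ I then 0 else (-1 : ℤ) ^ KoszulPos k (insert k I) • f (insert k I)

theorem koszulDiff_koszulContract_add_koszulContract_koszulDiff (B : Fin n → Module.End R M)
    (k : Fin n) (f : Finset (Fin n) → M) :
    koszulDiff B (koszulContract k f) + koszulContract k (koszulDiff B f) = ⇑(B k) ∘ f := by
  funext J
  rw [Pi.add_apply, Function.comp_apply]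
  by_cases hk : k ∈ J
  · rw [koszulContract, if_pos hk, add_zero, koszulDiff, Finset.sum_eq_single_of_mem k hk]
    · rw [koszulContract, if_neg (J.notMem_erase k), Finset.insert_erase hk, map_zsmul, smul_smul,
        ← pow_add, Even.neg_one_pow ⟨_, rfl⟩, one_smul]
    · intro j _ hjk
      rw [koszulContract, if_pos (Finset.mem_erase.mpr ⟨Ne.symm hjk, hk⟩), map_zero, smul_zero]
  · set S := ∑ j ∈ J, (-1 : ℤ) ^ KoszulPos j (insert k J) • B j (f ((insert k J).erase j))
    have hcontract : koszulContract k (koszulDiff B f) J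
        = B k (f J) + (-1 : ℤ) ^ KoszulPos k (insert k J) • S := by
      rw [koszulContract, if_neg hk, koszulDiff, Finset.sum_insert hk, Finset.erase_insert hk,
        smul_add, smul_smul, ← pow_add, Even.neg_one_pow ⟨_, rfl⟩, one_smul]
    have hdiff : koszulDiff B (koszulContract k f) J
        = -((-1 : ℤ) ^ KoszulPos k (insert k J) • S) := by
      rw [koszulDiff, Finset.smul_sum, ← Finset.sum_neg_distrib]
      refine Finset.sum_congr rfl fun j hj => ?_
      have hjk : j ≠ k := fun h => hk (h ▸ hj)
      have hsign := koszulSign_erase_erase (Finset.mem_insert_of_mem hj)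
        (Finset.mem_insert_self k J) hjk
      rw [Finset.erase_insert hk] at hsign
      rw [koszulContract, if_neg (fun h => hk (Finset.mem_of_mem_erase h)),
        ← Finset.erase_insert_of_ne hjk.symm, map_zsmul, smul_smul, hsign, neg_smul, smul_smul,
        mul_comm]
    rw [hcontract, hdiff]
    abel

end Ungraded

section Graded

variable {R M : Type*} [CommRing R] [AddCommGroup M] [Module R M] {n p : ℕ}

namespace KoszulC

def extend (σ : KoszulC R M n p) (I : Finset (Fin n)) : M :=
  if h : I.card = p then σ ⟨I, h⟩ else 0

theorem extend_of_card_eq (σ : KoszulC R M n p) {I : Finset (Fin n)} (h : I.card = p) :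
    σ.extend I = σ ⟨I, h⟩ :=
  dif_pos h

theorem extend_of_card_ne (σ : KoszulC R M n p) {I : Finset (Fin n)} (h : I.card ≠ p) :
    σ.extend I = 0 :=
  dif_neg h

end KoszulC

theorem koszulNabla_apply (B : Fin n → Module.End R M) (σ : KoszulC R M n p)
    (J : {J : Finset (Fin n) // J.card = p + 1}) :
    koszulNabla B p σ J = koszulDiff B σ.extend J := by
  obtain ⟨J, hJ⟩ := J
  simp only [koszulNabla, LinearMap.coe_mk, AddHom.coe_mk, koszulDiff]
  rw [← Finset.sum_attach J]
  refine Finset.sum_congr rfl fun k _ => ?_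
  rw [σ.extend_of_card_eq (by rw [Finset.card_erase_of_mem k.2, hJ, Nat.add_sub_cancel])]

theorem KoszulC.extend_koszulNabla (B : Fin n → Module.End R M) (σ : KoszulC R M n p) :
    (koszulNabla B p σ).extend = koszulDiff B σ.extend := by
  funext J
  by_cases hJ : J.card = p + 1
  · rw [extend_of_card_eq _ hJ, koszulNabla_apply]
  · rw [extend_of_card_ne _ hJ, koszulDiff]
    refine (Finset.sum_eq_zero fun k hk => ?_).symm
    have hpos : 0 < J.card := Finset.card_pos.mpr ⟨k, hk⟩
    rw [σ.extend_of_card_ne (by rw [Finset.card_erase_of_mem hk]; omega), map_zero, smul_zero]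

theorem koszulNabla_comp_koszulNabla (B : Fin n → Module.End R M)
    (hB : ∀ i j, Commute (B i) (B j)) (p : ℕ) :
    koszulNabla B (p + 1) ∘ₗ koszulNabla B p = 0 := by
  refine LinearMap.ext fun σ => funext fun J => ?_
  rw [LinearMap.comp_apply, koszulNabla_apply, KoszulC.extend_koszulNabla,
    koszulDiff_koszulDiff B hB]
  rfl

theorem koszulNabla_comp_left (B : Fin n → Module.End R M) (T : Module.End R M)
    (hT : ∀ j, Commute (B j) T) (σ : KoszulC R M n p) :
    koszulNabla B p (⇑T ∘ σ) = ⇑T ∘ koszulNabla B p σ := by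
  funext J
  simp only [koszulNabla, LinearMap.coe_mk, AddHom.coe_mk, Function.comp_apply, map_sum,
    map_zsmul]
  exact Finset.sum_congr rfl fun k _ => congrArg _ (LinearMap.congr_fun (hT k).eq _)

theorem koszulNabla_zero_injective (B : Fin n → Module.End R M) {k : Fin n}
    (hk : Function.Injective (B k)) : Function.Injective (koszulNabla B 0) := by
  have hsingleton (σ : KoszulC R M n 0) :
      koszulNabla B 0 σ ⟨{k}, Finset.card_singleton k⟩ = B k (σ ⟨∅, rfl⟩) := by
    rw [koszulNabla_apply, koszulDiff, Finset.sum_singleton, Finset.erase_singleton,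
      σ.extend_of_card_eq rfl]
    simp [KoszulPos, Finset.filter_singleton]
  intro σ τ h
  funext ⟨I, hI⟩
  obtain rfl := Finset.card_eq_zero.mp hI
  exact hk (by rw [← hsingleton, ← hsingleton, h])

namespace KoszulC

def contract (k : Fin n) (σ : KoszulC R M n (p + 1)) : KoszulC R M n p :=
  fun I => koszulContract k σ.extend I

theorem contract_zero (k : Fin n) : (0 : KoszulC R M n (p + 1)).contract k = 0 := by
  funext I
  simp [contract, koszulContract, extend]

theorem extend_contract (k : Fin n) (σ : KoszulC R M n (p + 1)) :
    (σ.contract k).extend = koszulContract k σ.extend := by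
  funext I
  by_cases hI : I.card = p
  · rw [extend_of_card_eq _ hI]
    rfl
  · rw [extend_of_card_ne _ hI, koszulContract]
    split_ifs with hk
    · rfl
    · rw [σ.extend_of_card_ne (by rw [Finset.card_insert_of_notMem hk]; omega), smul_zero]

end KoszulC

theorem koszulNabla_contract_add_contract_koszulNabla (B : Fin n → Module.End R M) (k : Fin n)
    (σ : KoszulC R M n (p + 1)) :
    koszulNabla B p (σ.contract k) + (koszulNabla B (p + 1) σ).contract k = ⇑(B k) ∘ σ := by
  funext J
  have h := congrFun (koszulDiff_koszulContract_add_koszulContract_koszulDiff B k σ.extend) J.1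
  rw [Pi.add_apply, Function.comp_apply, ← KoszulC.extend_koszulNabla B σ,
    ← KoszulC.extend_contract k σ, σ.extend_of_card_eq J.2] at h
  rw [Pi.add_apply, koszulNabla_apply]
  exact h

end Graded

/-- If at least one of the commuting endomorphisms `B k` is bijective, the
Koszul-type complex `(C^•, ∇)` is exact: the kernel of `∇ : C^p → C^{p+1}`
equals the image of `∇ : C^{p−1} → C^p` for every degree `p`; in degree `0`
(where `C^{−1} = 0`) this says `∇ : C^0 → C^1` is injective. -/
theorem koszul_exact {R M : Type*} [CommRing R] [AddCommGroup M]
    [Module R M] {n : ℕ} (B : Fin n → Module.End R M)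
    (hB : ∀ i j, Commute (B i) (B j))
    (hbij : ∃ k, Function.Bijective (B k)) :
    Function.Injective (koszulNabla B 0) ∧
      ∀ p : ℕ, LinearMap.ker (koszulNabla B (p + 1))
        = LinearMap.range (koszulNabla B p) := by
  obtain ⟨k, hk⟩ := hbij
  refine ⟨koszulNabla_zero_injective B hk.injective, fun p => le_antisymm ?_
    (LinearMap.range_le_ker_iff.mpr (koszulNabla_comp_koszulNabla B hB p))⟩
  intro σ hσ
  rw [LinearMap.mem_ker] at hσ
  set τ : KoszulC R M n p := Function.surjInv hk.surjective ∘ σ.contract k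
  have hτ : ⇑(B k) ∘ τ = σ.contract k := funext fun I => Function.surjInv_eq hk.surjective _
  have hhomotopy := koszulNabla_contract_add_contract_koszulNabla B k σ
  rw [hσ, KoszulC.contract_zero, add_zero, ← hτ, koszulNabla_comp_left B (B k) (hB · k)]
    at hhomotopy
  exact ⟨τ, funext fun J => hk.injective (congrFun hhomotopy J)⟩
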